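/- Assume Dynamics Smoothness holds and that Φ_{EJ}(T) is invertible. For π ∈ ℝ^{|E|} sufficiently small, set θ = Φ_{EJ}(T)⁻¹π, and let y_θ : [0,T] → ℝⁿ be a solution of the initial-value problem ẏ(t) = F(y(t),t), y_I(0) = b_I, y_J(0) = x_J(0) + θ satisfying ‖y_θ(t) − x(t)‖ ≤ e^{Lt}‖θ‖ for all t ∈ [0,T]. Then there is a constant c independent of π such that ‖y_{θ,E}(T) − b_E − π‖ ≤ c‖θ‖²; that is, the solution of the initial-value problem with the linearized correction θ satisfies the perturbed terminal condition x_E(T) = b_E + π to within O(‖θ‖²). -/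

import Mathlib

/-!
The error `u = y - x - Φ (y 0 - x 0)` of the linearization vanishes at `0`. Away from the switch
point, `u' = (F(y) - F(x) - DF(x)(y - x)) + DF(x) u`, and the first term is at most
`|L| ‖y - x‖² ≤ |L| e^{2|L|T} ‖θ‖²` by the Lipschitz bound on the Jacobian in the tube, so
Grönwall's inequality (applied on both sides of the switch point) gives `‖u T‖ = O(‖θ‖²)`.
Finally `u_E(T) = y_E(T) - b_E - π`, because `Φ(T)(y 0 - x 0)` has `E`-block `Φ_{EJ}(T) θ = π`.
-/

open Set Metric

/-- **Dynamics Smoothness** for a dynamics `Fd` with spatial Jacobian `DFd`, on the tube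
`{(χ,t) : t ∈ [a,b], ‖χ - x t‖ ≤ ρ}` around the trajectory `x` :
`Fd` is continuously differentiable on the tube, and `χ ↦ DFd χ t` is Lipschitz
with constant `L`, uniformly in `t`. -/
structure DynSmooth (n : ℕ) (Fd : (Fin n → ℝ) → ℝ → Fin n → ℝ)
    (DFd : (Fin n → ℝ) → ℝ → (Fin n → ℝ) →L[ℝ] (Fin n → ℝ))
    (x : ℝ → Fin n → ℝ) (a b ρ L : ℝ) : Prop where
  contDiffOn : ContDiffOn ℝ 1 (fun p : (Fin n → ℝ) × ℝ => Fd p.1 p.2)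
    {p : (Fin n → ℝ) × ℝ | p.2 ∈ Icc a b ∧ ‖p.1 - x p.2‖ ≤ ρ}
  hasFDeriv : ∀ χ t, t ∈ Icc a b → ‖χ - x t‖ ≤ ρ →
    HasFDerivAt (fun y => Fd y t) (DFd χ t) χ
  contDeriv : ContinuousOn (fun p : (Fin n → ℝ) × ℝ => DFd p.1 p.2)
    {p : (Fin n → ℝ) × ℝ | p.2 ∈ Icc a b ∧ ‖p.1 - x p.2‖ ≤ ρ}
  lip : ∀ t χ₁ χ₂, t ∈ Icc a b → ‖χ₁ - x t‖ ≤ ρ → ‖χ₂ - x t‖ ≤ ρ →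
    ‖DFd χ₁ t - DFd χ₂ t‖ ≤ L * ‖χ₁ - χ₂‖

/-- `xπ` is a solution of the boundary-value problem with switched dynamics
(`F₀` before the switch point `s`, `F₁` after), initial condition `xπ_I(0) = b_I`
and perturbed terminal condition `xπ_E(T) = b_E + π`. -/
def IsPertSol {n : ℕ} (T s : ℝ) (I E : Finset (Fin n)) (bI bE : Fin n → ℝ)
    (F₀ F₁ : (Fin n → ℝ) → ℝ → Fin n → ℝ) (π : {e // e ∈ E} → ℝ)
    (xπ : ℝ → Fin n → ℝ) : Prop :=
  ContinuousOn xπ (Icc 0 T) ∧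
  (∀ t ∈ Ico 0 s, HasDerivWithinAt xπ (F₀ (xπ t) t) (Icc 0 T) t) ∧
  (∀ t ∈ Ioc s T, HasDerivWithinAt xπ (F₁ (xπ t) t) (Icc 0 T) t) ∧
  (∀ i ∈ I, xπ 0 i = bI i) ∧
  (∀ e : {e // e ∈ E}, xπ T e.1 = bE e.1 + π e)

open Filter Topology
open scoped Matrix

section Gronwall

variable {E : Type*} [NormedAddCommGroup E] [NormedSpace ℝ E]

theorem continuous_gronwallBound (K ε : ℝ) :
    Continuous fun p : ℝ × ℝ => gronwallBound p.1 K ε p.2 := by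
  by_cases hK : K = 0
  · simp only [gronwallBound_K0, hK]
    fun_prop
  · simp only [gronwallBound_of_K_ne_0 hK]
    fun_prop

theorem monotone_gronwallBound_left (K ε x : ℝ) : Monotone fun δ => gronwallBound δ K ε x := by
  intro δ₁ δ₂ hδ
  dsimp only
  unfold gronwallBound
  split_ifs <;> gcongr

theorem gronwallBound_gronwallBound (δ K ε x y : ℝ) :
    gronwallBound (gronwallBound δ K ε x) K ε y = gronwallBound δ K ε (x + y) := by
  by_cases hK : K = 0
  · simp only [gronwallBound_K0, hK]
    ring
  · simp only [gronwallBound_of_K_ne_0 hK, mul_add, Real.exp_add]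
    field_simp
    ring

theorem gronwallBound_δ0 (K ε x : ℝ) : gronwallBound 0 K ε x = ε * gronwallBound 0 K 1 x := by
  unfold gronwallBound
  split_ifs <;> ring

/-- Grönwall on `[a, c]` and on `[σ, b]`, then let `σ ↓ c`. -/
theorem norm_le_gronwallBound_of_norm_deriv_right_le_of_ne {f : ℝ → E} {δ K ε a b c : ℝ}
    (hc : c ∈ Ioo a b) (hf : ContinuousOn f (Icc a b))
    (hf' : ∀ t ∈ Ico a b, t ≠ c → ∃ v, HasDerivWithinAt f v (Ici t) t ∧ ‖v‖ ≤ K * ‖f t‖ + ε)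
    (ha : ‖f a‖ ≤ δ) :
    ‖f b‖ ≤ gronwallBound δ K ε (b - a) := by
  choose! f' hderiv hbound using hf'
  have hfc : ‖f c‖ ≤ gronwallBound δ K ε (c - a) :=
    norm_le_gronwallBound_of_norm_deriv_right_le (hf.mono (Icc_subset_Icc_right hc.2.le))
      (fun t ht => hderiv t ⟨ht.1, ht.2.trans hc.2⟩ ht.2.ne) ha
      (fun t ht => hbound t ⟨ht.1, ht.2.trans hc.2⟩ ht.2.ne) c ⟨hc.1.le, le_rfl⟩
  have hfb : ∀ σ ∈ Ioc c b, ‖f b‖ ≤ gronwallBound ‖f σ‖ K ε (b - σ) := fun σ hσ =>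
    norm_le_gronwallBound_of_norm_deriv_right_le
      (hf.mono (Icc_subset_Icc_left (hc.1.trans hσ.1).le))
      (fun t ht => hderiv t ⟨(hc.1.trans (hσ.1.trans_le ht.1)).le, ht.2⟩ (hσ.1.trans_le ht.1).ne')
      le_rfl
      (fun t ht => hbound t ⟨(hc.1.trans (hσ.1.trans_le ht.1)).le, ht.2⟩ (hσ.1.trans_le ht.1).ne')
      b ⟨hσ.2, le_rfl⟩
  have hlim : Tendsto (fun σ => gronwallBound ‖f σ‖ K ε (b - σ)) (𝓝[>] c)
      (𝓝 (gronwallBound ‖f c‖ K ε (b - c))) := by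
    rw [← nhdsWithin_Ioc_eq_nhdsGT hc.2]
    have hpair : ContinuousWithinAt (fun σ => (‖f σ‖, b - σ)) (Ioc c b) c :=
      ((hf c ⟨hc.1.le, hc.2.le⟩).norm.prodMk
        (continuousWithinAt_const.sub continuousWithinAt_id)).mono
          (Ioc_subset_Icc_self.trans (Icc_subset_Icc_left hc.1.le))
    exact ((continuous_gronwallBound K ε).continuousAt.comp_continuousWithinAt hpair).tendsto
  calc ‖f b‖ ≤ gronwallBound ‖f c‖ K ε (b - c) :=
        ge_of_tendsto hlim (eventually_of_mem (Ioc_mem_nhdsGT hc.2) hfb)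
    _ ≤ gronwallBound (gronwallBound δ K ε (c - a)) K ε (b - c) :=
        monotone_gronwallBound_left K ε _ hfc
    _ = gronwallBound δ K ε (b - a) := by
        rw [gronwallBound_gronwallBound, sub_add_sub_cancel']

end Gronwall

theorem norm_image_sub_sub_fderiv_le_of_lipschitz {E F : Type*} [NormedAddCommGroup E]
    [NormedSpace ℝ E] [NormedAddCommGroup F] [NormedSpace ℝ F] {f : E → F} {f' : E → E →L[ℝ] F}
    {x y : E} {K : ℝ} (hK : 0 ≤ K) (hf : ∀ z ∈ closedBall x ‖y - x‖, HasFDerivAt f (f' z) z)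
    (hf' : ∀ z ∈ closedBall x ‖y - x‖, ‖f' z - f' x‖ ≤ K * ‖z - x‖) :
    ‖f y - f x - f' x (y - x)‖ ≤ K * ‖y - x‖ ^ 2 := by
  have hmvt := (convex_closedBall x ‖y - x‖).norm_image_sub_le_of_norm_hasFDerivWithin_le'
    (fun z hz => (hf z hz).hasFDerivWithinAt)
    (fun z hz => (hf' z hz).trans (mul_le_mul_of_nonneg_left (mem_closedBall_iff_norm.1 hz) hK))
    (mem_closedBall_self (norm_nonneg _)) (mem_closedBall_iff_norm.2 le_rfl)
  calc _ ≤ K * ‖y - x‖ * ‖y - x‖ := hmvt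
    _ = K * ‖y - x‖ ^ 2 := by ring

theorem exists_hasDerivWithinAt_sub_sub_apply_norm_le {E : Type*} [NormedAddCommGroup E]
    [NormedSpace ℝ E] {f : E → E} {A : E →L[ℝ] E} {x y : ℝ → E} {Φ : ℝ → E →L[ℝ] E}
    {S : Set ℝ} {t K ε : ℝ} (z : E) (hy : HasDerivWithinAt y (f (y t)) S t)
    (hx : HasDerivWithinAt x (f (x t)) S t) (hΦ : HasDerivWithinAt Φ (A.comp (Φ t)) S t)
    (hR : ‖f (y t) - f (x t) - A (y t - x t)‖ ≤ ε) (hA : ‖A‖ ≤ K) :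
    ∃ v, HasDerivWithinAt (fun τ => y τ - x τ - Φ τ z) v S t ∧
      ‖v‖ ≤ K * ‖y t - x t - Φ t z‖ + ε := by
  refine ⟨_, (hy.sub hx).sub (hΦ.clm_apply (hasDerivWithinAt_const t S z)), ?_⟩
  have hsplit : f (y t) - f (x t) - (A.comp (Φ t) z + Φ t 0)
      = (f (y t) - f (x t) - A (y t - x t)) + A (y t - x t - Φ t z) := by
    simp only [map_zero, add_zero, ContinuousLinearMap.comp_apply, map_sub]
    abel
  rw [hsplit, add_comm (K * _)]
  exact (norm_add_le _ _).trans (add_le_add hR (A.le_of_opNorm_le hA _))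

namespace DynSmooth

variable {n : ℕ} {Fd : (Fin n → ℝ) → ℝ → Fin n → ℝ}
  {DFd : (Fin n → ℝ) → ℝ → (Fin n → ℝ) →L[ℝ] (Fin n → ℝ)} {x : ℝ → Fin n → ℝ} {a b ρ L : ℝ}

theorem norm_sub_sub_le (h : DynSmooth n Fd DFd x a b ρ L) {t : ℝ} (ht : t ∈ Icc a b)
    {χ : Fin n → ℝ} (hχ : ‖χ - x t‖ ≤ ρ) :
    ‖Fd χ t - Fd (x t) t - DFd (x t) t (χ - x t)‖ ≤ |L| * ‖χ - x t‖ ^ 2 := by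
  have hball : ∀ z ∈ closedBall (x t) ‖χ - x t‖, ‖z - x t‖ ≤ ρ :=
    fun z hz => (mem_closedBall_iff_norm.1 hz).trans hχ
  refine norm_image_sub_sub_fderiv_le_of_lipschitz (abs_nonneg L)
    (fun z hz => h.hasFDeriv z t ht (hball z hz)) fun z hz => ?_
  calc ‖DFd z t - DFd (x t) t‖ ≤ L * ‖z - x t‖ :=
        h.lip t z (x t) ht (hball z hz) (by simpa using (norm_nonneg _).trans hχ)
    _ ≤ |L| * ‖z - x t‖ := mul_le_mul_of_nonneg_right (le_abs_self L) (norm_nonneg _)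

theorem exists_bound (h : DynSmooth n Fd DFd x a b ρ L) (hρ : 0 ≤ ρ) {c d : ℝ}
    (hcd : Icc c d ⊆ Icc a b) (hx : ContinuousOn x (Icc c d)) :
    ∃ C, ∀ t ∈ Icc c d, ‖DFd (x t) t‖ ≤ C :=
  isCompact_Icc.exists_bound_of_continuousOn
    (h.contDeriv.comp (hx.prodMk continuousOn_id) fun t ht => ⟨hcd ht, by simpa using hρ⟩)

theorem exists_hasDerivWithinAt_sub_sub_apply_norm_le (h : DynSmooth n Fd DFd x a b ρ L)
    {y : ℝ → Fin n → ℝ} {Φ : ℝ → (Fin n → ℝ) →L[ℝ] (Fin n → ℝ)} {S : Set ℝ} {t r K : ℝ}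
    (z : Fin n → ℝ) (ht : t ∈ Icc a b) (hyx : ‖y t - x t‖ ≤ r) (hr : r ≤ ρ)
    (hK : ‖DFd (x t) t‖ ≤ K) (hy : HasDerivWithinAt y (Fd (y t) t) S t)
    (hx : HasDerivWithinAt x (Fd (x t) t) S t)
    (hΦ : HasDerivWithinAt Φ ((DFd (x t) t).comp (Φ t)) S t) :
    ∃ v, HasDerivWithinAt (fun τ => y τ - x τ - Φ τ z) v S t ∧
      ‖v‖ ≤ K * ‖y t - x t - Φ t z‖ + |L| * r ^ 2 :=
  _root_.exists_hasDerivWithinAt_sub_sub_apply_norm_le (f := fun χ => Fd χ t) z hy hx hΦ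
    ((h.norm_sub_sub_le ht (hyx.trans hr)).trans (by gcongr)) hK

end DynSmooth

theorem Matrix.mulVec_eq_submatrix_mulVec_of_eq_zero {m ι R : Type*} [Fintype ι]
    [NonUnitalNonAssocSemiring R] (A : Matrix m ι R) (S : Finset ι) {z : ι → R}
    (hz : ∀ k ∉ S, z k = 0) : A *ᵥ z = A.submatrix id ((↑) : S → ι) *ᵥ fun k => z k := by
  ext i
  simp only [Matrix.mulVec, dotProduct, Matrix.submatrix_apply, id]
  rw [← Finset.sum_subset (Finset.subset_univ S) fun k _ hk => by simp [hz k hk]]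
  exact (Finset.sum_coe_sort S _).symm

theorem LinearMap.apply_eq_of_submatrix_mul_eq_one {ι R : Type*} [Fintype ι] [DecidableEq ι]
    [CommSemiring R] {E J : Finset ι} (P : (ι → R) →ₗ[R] ι → R) {N : Matrix J E R}
    (hN : (LinearMap.toMatrix' P).submatrix ((↑) : E → ι) ((↑) : J → ι) * N = 1)
    (π : E → R) {z : ι → R} (hzJ : ∀ k ∉ J, z k = 0) (hz : ∀ j : J, z j = (N *ᵥ π) j)
    (e : E) : P z e = π e := by
  calc P z e = (LinearMap.toMatrix' P *ᵥ z) e := by rw [LinearMap.toMatrix'_mulVec]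
    _ = (((LinearMap.toMatrix' P).submatrix ((↑) : E → ι) ((↑) : J → ι) * N) *ᵥ π) e := by
        rw [Matrix.mulVec_eq_submatrix_mulVec_of_eq_zero _ J hzJ, funext hz,
          ← Matrix.mulVec_mulVec]
        rfl
    _ = π e := by rw [hN, Matrix.one_mulVec]

section SwitchedLinearization

variable {n : ℕ} {T s ρ L : ℝ} {F₀ F₁ : (Fin n → ℝ) → ℝ → Fin n → ℝ}
  {DF₀ DF₁ : (Fin n → ℝ) → ℝ → (Fin n → ℝ) →L[ℝ] (Fin n → ℝ)} {x : ℝ → Fin n → ℝ}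
  {Φ : ℝ → (Fin n → ℝ) →L[ℝ] (Fin n → ℝ)}

theorem exists_norm_sub_sub_fundamental_le (hs : s ∈ Ioo 0 T) (hρ : 0 ≤ ρ)
    (hxc : ContinuousOn x (Icc 0 T))
    (hx₀ : ∀ t ∈ Ico 0 s, HasDerivWithinAt x (F₀ (x t) t) (Icc 0 T) t)
    (hx₁ : ∀ t ∈ Ioc s T, HasDerivWithinAt x (F₁ (x t) t) (Icc 0 T) t)
    (hds₀ : DynSmooth n F₀ DF₀ x 0 (s + ρ) ρ L) (hds₁ : DynSmooth n F₁ DF₁ x (s - ρ) T ρ L)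
    (hΦc : ContinuousOn Φ (Icc 0 T)) (hΦ0 : Φ 0 = ContinuousLinearMap.id ℝ (Fin n → ℝ))
    (hΦode : ∀ t ∈ Icc 0 T, t ≠ s → HasDerivWithinAt Φ
      ((if t < s then DF₀ (x t) t else DF₁ (x t) t).comp (Φ t)) (Icc 0 T) t) :
    ∃ M, ∀ (y : ℝ → Fin n → ℝ) (r : ℝ), ContinuousOn y (Icc 0 T) →
      (∀ t ∈ Ico 0 s, HasDerivWithinAt y (F₀ (y t) t) (Icc 0 T) t) →
      (∀ t ∈ Ioc s T, HasDerivWithinAt y (F₁ (y t) t) (Icc 0 T) t) →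
      (∀ t ∈ Icc 0 T, ‖y t - x t‖ ≤ r) → r ≤ ρ →
      ‖y T - x T - Φ T (y 0 - x 0)‖ ≤ |L| * r ^ 2 * gronwallBound 0 M 1 T := by
  obtain ⟨hs0, hsT⟩ := hs
  obtain ⟨C₀, hC₀⟩ := hds₀.exists_bound hρ (Icc_subset_Icc_right (by linarith))
    (hxc.mono (Icc_subset_Icc_right hsT.le))
  obtain ⟨C₁, hC₁⟩ := hds₁.exists_bound hρ (Icc_subset_Icc_left (by linarith))
    (hxc.mono (Icc_subset_Icc_left hs0.le))
  refine ⟨max C₀ C₁, fun y r hyc hy₀ hy₁ htube hr => ?_⟩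
  set z := y 0 - x 0
  have hderiv (t : ℝ) (ht : t ∈ Icc 0 T) (hts : t ≠ s) :
      ∃ v, HasDerivWithinAt (fun τ => y τ - x τ - Φ τ z) v (Icc 0 T) t ∧
        ‖v‖ ≤ max C₀ C₁ * ‖y t - x t - Φ t z‖ + |L| * r ^ 2 := by
    have hΦt := hΦode t ht hts
    rcases hts.lt_or_gt with hlt | hgt
    · rw [if_pos hlt] at hΦt
      exact hds₀.exists_hasDerivWithinAt_sub_sub_apply_norm_le z ⟨ht.1, by linarith⟩
        (htube t ht) hr ((hC₀ t ⟨ht.1, hlt.le⟩).trans (le_max_left _ _))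
        (hy₀ t ⟨ht.1, hlt⟩) (hx₀ t ⟨ht.1, hlt⟩) hΦt
    · rw [if_neg hgt.not_gt] at hΦt
      exact hds₁.exists_hasDerivWithinAt_sub_sub_apply_norm_le z ⟨by linarith, ht.2⟩
        (htube t ht) hr ((hC₁ t ⟨hgt.le, ht.2⟩).trans (le_max_right _ _))
        (hy₁ t ⟨hgt, ht.2⟩) (hx₁ t ⟨hgt, ht.2⟩) hΦt
  have hgronwall := norm_le_gronwallBound_of_norm_deriv_right_le_of_ne
    (f := fun τ => y τ - x τ - Φ τ z) (δ := 0) ⟨hs0, hsT⟩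
    ((hyc.sub hxc).sub (hΦc.clm_apply continuousOn_const))
    (fun t ht hts => (hderiv t (Ico_subset_Icc_self ht) hts).imp fun v hv =>
      ⟨hv.1.mono_of_mem_nhdsWithin (Icc_mem_nhdsGE_of_mem ht), hv.2⟩)
    (by simp [z, hΦ0])
  rw [sub_zero, gronwallBound_δ0] at hgronwall
  exact hgronwall

end SwitchedLinearization

theorem Matrix.exists_pos_forall_norm_le_mul_norm_mulVec_le {m ι : Type*} [Fintype m]
    [Fintype ι] (N : Matrix m ι ℝ) (C : ℝ) {ρ : ℝ} (hρ : 0 < ρ) :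
    ∃ ε > 0, ∀ v : ι → ℝ, ‖v‖ ≤ ε → C * ‖N *ᵥ v‖ ≤ ρ := by
  have hcont : Continuous fun v : ι → ℝ => C * ‖N *ᵥ v‖ :=
    continuous_const.mul (continuous_const.matrix_mulVec continuous_id).norm
  obtain ⟨ε, hε, hball⟩ := nhds_basis_closedBall.eventually_iff.1
    ((hcont.tendsto 0).eventually (ge_mem_nhds (by simpa using hρ)))
  exact ⟨ε, hε, fun v hv => hball (mem_closedBall_zero_iff.2 hv)⟩

theorem linearized_correction_terminal_condition_general
    {n : ℕ} (T s ρ L : ℝ) (hs : s ∈ Ioo 0 T) (hρ : 0 < ρ)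
    (I E : Finset (Fin n))
    (bI bE : Fin n → ℝ)
    (F₀ F₁ : (Fin n → ℝ) → ℝ → Fin n → ℝ)
    (DF₀ DF₁ : (Fin n → ℝ) → ℝ → (Fin n → ℝ) →L[ℝ] (Fin n → ℝ))
    (x : ℝ → Fin n → ℝ)
    -- `x` solves the unperturbed boundary-value problem
    (hx : IsPertSol T s I E bI bE F₀ F₁ (0 : {e // e ∈ E} → ℝ) x)
    -- Dynamics Smoothness on the two tubes
    (hds₀ : DynSmooth n F₀ DF₀ x 0 (s + ρ) ρ L)
    (hds₁ : DynSmooth n F₁ DF₁ x (s - ρ) T ρ L)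
    -- the fundamental matrix `Φ` of the linearized dynamics along `x`
    (Φ : ℝ → (Fin n → ℝ) →L[ℝ] (Fin n → ℝ))
    (hΦc : ContinuousOn Φ (Icc 0 T))
    (hΦ0 : Φ 0 = ContinuousLinearMap.id ℝ (Fin n → ℝ))
    (hΦode : ∀ t ∈ Icc 0 T, t ≠ s → HasDerivWithinAt Φ
      ((if t < s then DF₀ (x t) t else DF₁ (x t) t).comp (Φ t)) (Icc 0 T) t)
    -- `N = Φ_{EJ}(T)⁻¹`, where `J = Iᶜ`
    (N : Matrix {j // j ∈ Iᶜ} {e // e ∈ E} ℝ)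
    (hN₁ : (LinearMap.toMatrix' (Φ T : (Fin n → ℝ) →ₗ[ℝ] Fin n → ℝ)).submatrix
        (Subtype.val : {e // e ∈ E} → Fin n) (Subtype.val : {j // j ∈ Iᶜ} → Fin n) * N = 1) :
    -- for `π` sufficiently small, with `θ := Φ_{EJ}(T)⁻¹ π = N π`, the solution `y_θ` of the
    -- initial-value problem satisfies `‖y_{θ,E}(T) - b_E - π‖ ≤ c ‖θ‖²`
    ∃ c : ℝ, ∃ ε > (0 : ℝ), ∀ π : {e // e ∈ E} → ℝ, ‖π‖ ≤ ε →
      ∀ y : ℝ → Fin n → ℝ,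
      -- `y = y_θ` solves the initial-value problem with initial data
      -- `y_I(0) = b_I`, `y_J(0) = x_J(0) + θ`, and satisfies `‖y - x‖ ≤ e^{Lt}‖θ‖`
      ContinuousOn y (Icc 0 T) →
      (∀ t ∈ Ico 0 s, HasDerivWithinAt y (F₀ (y t) t) (Icc 0 T) t) →
      (∀ t ∈ Ioc s T, HasDerivWithinAt y (F₁ (y t) t) (Icc 0 T) t) →
      (∀ i ∈ I, y 0 i = bI i) →
      (∀ j : {j // j ∈ Iᶜ}, y 0 j.1 = x 0 j.1 + N.mulVec π j) →
      (∀ t ∈ Icc 0 T, ‖y t - x t‖ ≤ Real.exp (L * t) * ‖N.mulVec π‖) →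
      ‖(fun e : {e // e ∈ E} => y T e.1 - bE e.1 - π e)‖ ≤ c * ‖N.mulVec π‖ ^ 2 := by
  obtain ⟨hxc, hx₀, hx₁, hxI, hxE⟩ := hx
  obtain ⟨M, hM⟩ := exists_norm_sub_sub_fundamental_le hs hρ.le hxc hx₀ hx₁ hds₀ hds₁ hΦc hΦ0 hΦode
  obtain ⟨ε, hε, hsmall⟩ := N.exists_pos_forall_norm_le_mul_norm_mulVec_le (Real.exp (|L| * T)) hρ
  refine ⟨|L| * Real.exp (|L| * T) ^ 2 * gronwallBound 0 M 1 T, ε, hε, ?_⟩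
  intro π hπ y hyc hy₀ hy₁ hyI hyJ hybd
  have htube : ∀ t ∈ Icc 0 T, ‖y t - x t‖ ≤ Real.exp (|L| * T) * ‖N *ᵥ π‖ := by
    intro t ht
    have hLt : L * t ≤ |L| * T := (mul_le_mul_of_nonneg_right (le_abs_self L) ht.1).trans
      (mul_le_mul_of_nonneg_left ht.2 (abs_nonneg L))
    exact (hybd t ht).trans (mul_le_mul_of_nonneg_right (Real.exp_le_exp.2 hLt) (norm_nonneg _))
  have hΦz (e : {e // e ∈ E}) : Φ T (y 0 - x 0) e = π e :=
    LinearMap.apply_eq_of_submatrix_mul_eq_one (Φ T : (Fin n → ℝ) →ₗ[ℝ] Fin n → ℝ) hN₁ π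
      (fun k hk => by simp [hyI k (by simpa using hk), hxI k (by simpa using hk)])
      (fun j => by simp [hyJ j]) e
  calc ‖fun e : {e // e ∈ E} => y T e.1 - bE e.1 - π e‖ ≤ ‖y T - x T - Φ T (y 0 - x 0)‖ := by
        refine (pi_norm_le_iff_of_nonneg (norm_nonneg _)).2 fun e => ?_
        have hxT : x T e = bE e := by simpa using hxE e
        rw [show y T e - bE e - π e = (y T - x T - Φ T (y 0 - x 0)) e by
          rw [Pi.sub_apply, Pi.sub_apply, hxT, hΦz e]]
        exact norm_le_pi_norm _ _
    _ ≤ _ := hM y _ hyc hy₀ hy₁ htube (hsmall π hπ)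
    _ = _ := by ring

/-- the linearized correction `θ = Φ_{EJ}(T)⁻¹ π` meets the perturbed
terminal condition to within `O(‖θ‖²)`. -/
theorem linearized_correction_terminal_condition
    {n : ℕ} (hn : 0 < n) (T s ρ L : ℝ) (hT : 0 < T) (hs : s ∈ Ioo 0 T) (hρ : 0 < ρ)
    (I E : Finset (Fin n)) (hcard : I.card + E.card = n)
    (bI bE : Fin n → ℝ)
    (F₀ F₁ : (Fin n → ℝ) → ℝ → Fin n → ℝ)
    (DF₀ DF₁ : (Fin n → ℝ) → ℝ → (Fin n → ℝ) →L[ℝ] (Fin n → ℝ))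
    (x : ℝ → Fin n → ℝ)
    -- `x` solves the unperturbed boundary-value problem
    (hx : IsPertSol T s I E bI bE F₀ F₁ (0 : {e // e ∈ E} → ℝ) x)
    -- Dynamics Smoothness on the two tubes
    (hds₀ : DynSmooth n F₀ DF₀ x 0 (s + ρ) ρ L)
    (hds₁ : DynSmooth n F₁ DF₁ x (s - ρ) T ρ L)
    -- the fundamental matrix `Φ` of the linearized dynamics along `x`
    (Φ : ℝ → (Fin n → ℝ) →L[ℝ] (Fin n → ℝ))
    (hΦc : ContinuousOn Φ (Icc 0 T))
    (hΦ0 : Φ 0 = ContinuousLinearMap.id ℝ (Fin n → ℝ))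
    (hΦode : ∀ t ∈ Icc 0 T, t ≠ s → HasDerivWithinAt Φ
      ((if t < s then DF₀ (x t) t else DF₁ (x t) t).comp (Φ t)) (Icc 0 T) t)
    -- `N = Φ_{EJ}(T)⁻¹`, where `J = Iᶜ`
    (N : Matrix {j // j ∈ Iᶜ} {e // e ∈ E} ℝ)
    (hN₁ : (LinearMap.toMatrix' (Φ T : (Fin n → ℝ) →ₗ[ℝ] Fin n → ℝ)).submatrix
        (Subtype.val : {e // e ∈ E} → Fin n) (Subtype.val : {j // j ∈ Iᶜ} → Fin n) * N = 1)
    (hN₂ : N * (LinearMap.toMatrix' (Φ T : (Fin n → ℝ) →ₗ[ℝ] Fin n → ℝ)).submatrix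
        (Subtype.val : {e // e ∈ E} → Fin n) (Subtype.val : {j // j ∈ Iᶜ} → Fin n) = 1) :
    -- for `π` sufficiently small, with `θ := Φ_{EJ}(T)⁻¹ π = N π`, the solution `y_θ` of the
    -- initial-value problem satisfies `‖y_{θ,E}(T) - b_E - π‖ ≤ c ‖θ‖²`
    ∃ c : ℝ, ∃ ε > (0 : ℝ), ∀ π : {e // e ∈ E} → ℝ, ‖π‖ ≤ ε →
      ∀ y : ℝ → Fin n → ℝ,
      -- `y = y_θ` solves the initial-value problem with initial data
      -- `y_I(0) = b_I`, `y_J(0) = x_J(0) + θ`, and satisfies `‖y - x‖ ≤ e^{Lt}‖θ‖`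
      ContinuousOn y (Icc 0 T) →
      (∀ t ∈ Ico 0 s, HasDerivWithinAt y (F₀ (y t) t) (Icc 0 T) t) →
      (∀ t ∈ Ioc s T, HasDerivWithinAt y (F₁ (y t) t) (Icc 0 T) t) →
      (∀ i ∈ I, y 0 i = bI i) →
      (∀ j : {j // j ∈ Iᶜ}, y 0 j.1 = x 0 j.1 + N.mulVec π j) →
      (∀ t ∈ Icc 0 T, ‖y t - x t‖ ≤ Real.exp (L * t) * ‖N.mulVec π‖) →
      ‖(fun e : {e // e ∈ E} => y T e.1 - bE e.1 - π e)‖ ≤ c * ‖N.mulVec π‖ ^ 2 :=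
  linearized_correction_terminal_condition_general T s ρ L hs hρ I E bI bE F₀ F₁ DF₀ DF₁ x hx hds₀
    hds₁ Φ hΦc hΦ0 hΦode N hN₁
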